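/- arXiv:2102.08554 — 11 statements merged into one kernel-verified Lean document; each statement's English description precedes it below -/
import Mathlib

section
/- Let k ≥ 1 and let P₂ be a k×k real diagonal matrix with positive diagonal entries summing to 1. Let P₁₂ and P₂₃ be invertible k×k real matrices and set P₁₃ := P₁₂·P₂⁻¹·P₂₃ (the conditional-independence relation X₁ ⊥ X₃ | X₂). Let q₁, q₂, q₃ ∈ [0,1) and set Eᵢ := (1−qᵢ)I + (qᵢ/k)O for i = 1,2,3. Define the noisy matrices P_{1'2'} := E₁P₁₂E₂, P_{2'3'} := E₂P₂₃E₃, P_{1'3'} := E₁P₁₃E₃, and P_{2'} := (1−q₂)P₂ + (q₂/k)I. Then P_{1'3'} is invertible and the matrix quadratic identity holds: (q₂²/k²)(O − kI) − (q₂/k)(O·P_{2'} + P_{2'}·O − k·P_{2'} − I) + P_{2'3'}·P_{1'3'}⁻¹·P_{1'2'} − P_{2'} = 0 (the k×k zero matrix). That is, the true noise probability q₂ of the middle node is a root of the quadratic equation (Eq. (5) of the paper) built purely from noisy quantities. -/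
/-- The `k × k` all-ones matrix `O`. -/
noncomputable def allOnes (k : ℕ) : Matrix (Fin k) (Fin k) ℝ :=
  Matrix.of fun _ _ => (1 : ℝ)

/-- The `k`-ary symmetric channel matrix `E_q = (1−q)·I + (q/k)·O`. -/
noncomputable def channel (k : ℕ) (q : ℝ) : Matrix (Fin k) (Fin k) ℝ :=
  (1 - q) • (1 : Matrix (Fin k) (Fin k) ℝ) + (q / k) • allOnes k

lemma allOnes_mul_allOnes (k : ℕ) : allOnes k * allOnes k = (k:ℝ) • allOnes k := by
  ext i j
  simp [allOnes, Matrix.mul_apply]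

lemma oDo (k : ℕ) (d : Fin k → ℝ) (hdsum : ∑ i, d i = 1) :
    allOnes k * (Matrix.diagonal d * allOnes k) = allOnes k := by
  ext i j
  simp [allOnes, Matrix.mul_apply, Matrix.diagonal, hdsum]

lemma channel_mul_eq_one (k : ℕ) (hk : 1 ≤ k) (q : ℝ) (hq' : q < 1) :
    channel k q * ((1/(1-q)) • 1 - (q/(k*(1-q))) • allOnes k) = 1 := by
  have hs : (1 - q) ≠ 0 := by intro h; nlinarith [h]
  have hk0 : (k:ℝ) ≠ 0 := Nat.cast_ne_zero.mpr (by omega)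
  have h2 : (k:ℝ) - k*q ≠ 0 := by
    have h0 : (0:ℝ) < k := lt_of_le_of_ne (Nat.cast_nonneg k) (Ne.symm hk0)
    intro h; nlinarith [h]
  simp only [channel, mul_sub, add_mul, sub_mul, mul_add, smul_mul_assoc,
    Matrix.mul_smul, Matrix.one_mul, Matrix.mul_one, allOnes_mul_allOnes, smul_smul]
  match_scalars
  · field_simp
  · field_simp
    ring

lemma one_mul_channel_comm (k : ℕ) (hk : 1 ≤ k) (q : ℝ) (hq' : q < 1) :
    ((1/(1-q)) • 1 - (q/(k*(1-q))) • allOnes k) * channel k q = 1 := by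
  have hs : (1 - q) ≠ 0 := by intro h; nlinarith [h]
  have hk0 : (k:ℝ) ≠ 0 := Nat.cast_ne_zero.mpr (by omega)
  have h2 : (k:ℝ) - k*q ≠ 0 := by
    have h0 : (0:ℝ) < k := lt_of_le_of_ne (Nat.cast_nonneg k) (Ne.symm hk0)
    intro h; nlinarith [h]
  simp only [channel, mul_sub, add_mul, sub_mul, mul_add, smul_mul_assoc,
    Matrix.mul_smul, Matrix.one_mul, Matrix.mul_one, allOnes_mul_allOnes, smul_smul]
  match_scalars
  · field_simp
  · field_simp
    ring

lemma channel_isUnit (k : ℕ) (hk : 1 ≤ k) (q : ℝ) (hq' : q < 1) :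
    IsUnit (channel k q) :=
  ⟨⟨channel k q, _, channel_mul_eq_one k hk q hq', one_mul_channel_comm k hk q hq'⟩, rfl⟩

/-- Suppose `X₁ ⊥ X₃ | X₂`, i.e. `P₁₃ = P₁₂ P₂⁻¹ P₂₃` where `P₂` is diagonal with positive
entries summing to 1 and `P₁₂, P₂₃` are invertible.  After passing each node through a
`k`-ary symmetric channel with error probabilities `q₁, q₂, q₃ ∈ [0,1)`, the noisy joint
matrices `P_{1'2'} = E₁P₁₂E₂`, `P_{2'3'} = E₂P₂₃E₃`, `P_{1'3'} = E₁P₁₃E₃` and noisy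
marginal `P_{2'} = (1−q₂)P₂ + (q₂/k)I` satisfy: `P_{1'3'}` is invertible and
`(q₂²/k²)(O−kI) − (q₂/k)(O P_{2'} + P_{2'} O − k P_{2'} − I) + P_{2'3'} P_{1'3'}⁻¹ P_{1'2'} − P_{2'} = 0`. -/
theorem middle_node_quadratic (k : ℕ) (hk : 1 ≤ k)
    (d : Fin k → ℝ) (hd : ∀ i, 0 < d i) (hdsum : ∑ i, d i = 1)
    (P12 P23 : Matrix (Fin k) (Fin k) ℝ) (h12 : IsUnit P12) (h23 : IsUnit P23)
    (q1 q2 q3 : ℝ) (hq1 : 0 ≤ q1) (hq1' : q1 < 1)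
    (hq2 : 0 ≤ q2) (hq2' : q2 < 1) (hq3 : 0 ≤ q3) (hq3' : q3 < 1) :
    IsUnit (channel k q1 * (P12 * (Matrix.diagonal d)⁻¹ * P23) * channel k q3) ∧
    (q2 ^ 2 / (k : ℝ) ^ 2) • (allOnes k - (k : ℝ) • (1 : Matrix (Fin k) (Fin k) ℝ))
      - (q2 / (k : ℝ)) •
          (allOnes k * ((1 - q2) • Matrix.diagonal d + (q2 / k) • 1)
            + ((1 - q2) • Matrix.diagonal d + (q2 / k) • 1) * allOnes k
            - (k : ℝ) • ((1 - q2) • Matrix.diagonal d + (q2 / k) • 1)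
            - 1)
      + (channel k q2 * P23 * channel k q3)
          * (channel k q1 * (P12 * (Matrix.diagonal d)⁻¹ * P23) * channel k q3)⁻¹
          * (channel k q1 * P12 * channel k q2)
      - ((1 - q2) • Matrix.diagonal d + (q2 / k) • 1)
      = 0 := by
  have hE1 := channel_isUnit k hk q1 hq1'
  have hE2 := channel_isUnit k hk q2 hq2'
  have hE3 := channel_isUnit k hk q3 hq3'
  have hD : IsUnit (Matrix.diagonal d) := by
    rw [Matrix.isUnit_iff_isUnit_det, Matrix.det_diagonal, isUnit_iff_ne_zero]
    exact Finset.prod_ne_zero_iff.mpr fun i _ => (hd i).ne'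
  have dD := (Matrix.isUnit_iff_isUnit_det _).mp hD
  have hDinv : IsUnit (Matrix.diagonal d)⁻¹ := Matrix.isUnit_nonsing_inv_iff.mpr hD
  have hM : IsUnit (P12 * (Matrix.diagonal d)⁻¹ * P23) := (h12.mul hDinv).mul h23
  have hUnit : IsUnit (channel k q1 * (P12 * (Matrix.diagonal d)⁻¹ * P23) * channel k q3) :=
    (hE1.mul hM).mul hE3
  refine ⟨hUnit, ?_⟩
  -- determinant units
  have dE1 := (Matrix.isUnit_iff_isUnit_det _).mp hE1
  have dE2 := (Matrix.isUnit_iff_isUnit_det _).mp hE2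
  have dE3 := (Matrix.isUnit_iff_isUnit_det _).mp hE3
  have d12 := (Matrix.isUnit_iff_isUnit_det _).mp h12
  have d23 := (Matrix.isUnit_iff_isUnit_det _).mp h23
  have key : (channel k q2 * P23 * channel k q3)
          * (channel k q1 * (P12 * (Matrix.diagonal d)⁻¹ * P23) * channel k q3)⁻¹
          * (channel k q1 * P12 * channel k q2)
      = channel k q2 * (Matrix.diagonal d * channel k q2) := by
    rw [Matrix.mul_inv_rev, Matrix.mul_inv_rev, Matrix.mul_inv_rev, Matrix.mul_inv_rev,
      Matrix.nonsing_inv_nonsing_inv _ dD]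
    simp only [Matrix.mul_assoc]
    rw [Matrix.mul_nonsing_inv_cancel_left _ _ dE3,
      Matrix.mul_nonsing_inv_cancel_left _ _ d23,
      Matrix.nonsing_inv_mul_cancel_left _ _ dE1,
      Matrix.nonsing_inv_mul_cancel_left _ _ d12]
  rw [key]
  have hk0 : (k:ℝ) ≠ 0 := Nat.cast_ne_zero.mpr (by omega)
  simp only [channel, add_mul, mul_add, smul_mul_assoc, Matrix.mul_smul,
    Matrix.one_mul, Matrix.mul_one, smul_smul, oDo k d hdsum]
  match_scalars <;> (try field_simp) <;> (try ring)
end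

section
/- Let k ≥ 1 and let P_a, P_{ac}, E_a, E_b, E_c be k×k real matrices with P_a, P_{ac}, E_a, E_c invertible. Suppose P_{bc} = P_{ba}·P_a⁻¹·P_{ac} and P_{ab} is arbitrary with P_{ba} arbitrary (the conditional-independence factorization through node a). Then (E_b·P_{bc}·E_c)·(E_a·P_{ac}·E_c)⁻¹·(E_a·P_{ab}·E_b) = E_b·P_{ba}·P_a⁻¹·P_{ab}·E_b. In particular, the triple product of noisy joint PMF matrices P_{b'c'}·P_{a'c'}⁻¹·P_{a'b'} does not depend on the third node c: replacing c (and P_{ac}, P_{bc}, E_c) by any other node satisfying the same factorization yields the same matrix. -/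
/-- Suppose `P_{bc} = P_{ba} P_a⁻¹ P_{ac}` (conditional independence `X_b ⊥ X_c | X_a`) with
`P_a, P_{ac}, E_a, E_c` invertible.  Then the triple product of noisy joint PMF matrices
`P_{b'c'} P_{a'c'}⁻¹ P_{a'b'} = (E_b P_{bc} E_c)(E_a P_{ac} E_c)⁻¹(E_a P_{ab} E_b)` equals
`E_b P_{ba} P_a⁻¹ P_{ab} E_b`, which does not depend on the third node `c`. -/
theorem triple_product_independent_of_third_node (k : ℕ)
    (Pa Pac Pab Pba Pbc Ea Eb Ec : Matrix (Fin k) (Fin k) ℝ)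
    (hPa : IsUnit Pa) (hPac : IsUnit Pac) (hEa : IsUnit Ea) (hEc : IsUnit Ec)
    (hfact : Pbc = Pba * Pa⁻¹ * Pac) :
    (Eb * Pbc * Ec) * (Ea * Pac * Ec)⁻¹ * (Ea * Pab * Eb)
      = Eb * Pba * Pa⁻¹ * Pab * Eb := by
  have dPac := (Matrix.isUnit_iff_isUnit_det _).mp hPac
  have dEa := (Matrix.isUnit_iff_isUnit_det _).mp hEa
  have dEc := (Matrix.isUnit_iff_isUnit_det _).mp hEc
  have h1 : (Ea * Pac * Ec)⁻¹ = Ec⁻¹ * Pac⁻¹ * Ea⁻¹ := by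
    rw [Matrix.mul_inv_rev, Matrix.mul_inv_rev, mul_assoc]
  subst hfact
  rw [h1]
  have hc : Ec * Ec⁻¹ = 1 := Matrix.mul_nonsing_inv _ dEc
  have hp : Pac * Pac⁻¹ = 1 := Matrix.mul_nonsing_inv _ dPac
  have ha : Ea⁻¹ * Ea = 1 := Matrix.nonsing_inv_mul _ dEa
  calc Eb * (Pba * Pa⁻¹ * Pac) * Ec * (Ec⁻¹ * Pac⁻¹ * Ea⁻¹) * (Ea * Pab * Eb)
      = Eb * (Pba * Pa⁻¹) * ((Pac * (Ec * Ec⁻¹) * Pac⁻¹) * (Ea⁻¹ * Ea)) * (Pab * Eb) := by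
        simp only [mul_assoc]
    _ = Eb * Pba * Pa⁻¹ * Pab * Eb := by
        simp only [hc, ha, mul_one, hp]
        simp only [mul_one, mul_assoc]
end

section
/- Let k ≥ 3, let S be the k×k cyclic shift-by-one permutation matrix, and let α, δ, x be real numbers. Define γ := (x−1)² − α² and e := δ·(α−δ). Then the squared Frobenius norm of the matrix ((x−1)²/k²)·(O − kI) + (((α−δ)² + δ²)/k)·I − (α²/k²)·O + ((α−δ)δ/k)·(S + Sᵀ) equals (1/k³)·[((k−1)γ + 2ke)² + 2(γ + ke)² + (k−3)γ²]. (This is the exact evaluation of the residual Q²(x) of the identifiability quadratic for a perturbed symmetric graphical model.) -/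
open Matrix
open Finset

lemma fin_facts (k : ℕ) [NeZero k] (hk : 3 ≤ k) (i : Fin k) :
    i + 1 ≠ i ∧ i - 1 ≠ i ∧ i + 1 ≠ i - 1 := by
  have h1 : ((1 : Fin k) : ℕ) = 1 := by
    rw [Fin.val_one']; exact Nat.mod_eq_of_lt (by omega)
  have h10 : (1 : Fin k) ≠ 0 := by
    intro h
    have := congrArg Fin.val h
    rw [h1] at this
    simp at this
  have h2 : ((1 : Fin k) + 1 : Fin k) ≠ 0 := by
    intro h
    have := congrArg Fin.val h
    rw [Fin.val_add, h1] at this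
    rw [Nat.mod_eq_of_lt (show 1+1 < k by omega)] at this
    simp [Fin.ext_iff] at this
  refine ⟨?_, ?_, ?_⟩
  · intro h
    exact h10 (add_eq_left.mp h)
  · intro h
    exact h10 (sub_eq_self.mp h)
  · intro h
    apply h2
    have h3 := sub_eq_zero.mpr h
    calc (1:Fin k) + 1 = i + 1 - (i - 1) := by abel
      _ = 0 := h3

lemma sum_sq_aux (k : ℕ) [NeZero k] (hk : 3 ≤ k) (A B C : ℝ) (i : Fin k) :
    ∑ j : Fin k, (A + (if j = i then B else 0) + (if j = i + 1 then C else 0)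
      + (if j = i - 1 then C else 0)) ^ 2
    = k * A ^ 2 + (2*A*B + B^2) + 2*(2*A*C + C^2) := by
  obtain ⟨d1, d2, d3⟩ := fin_facts k hk i
  have key : ∀ j : Fin k, (A + (if j = i then B else 0) + (if j = i + 1 then C else 0)
      + (if j = i - 1 then C else 0)) ^ 2
      = A^2 + (if j = i then 2*A*B + B^2 else 0) + (if j = i + 1 then 2*A*C + C^2 else 0)
        + (if j = i - 1 then 2*A*C + C^2 else 0) := by
    intro j
    by_cases h1 : j = i
    · subst h1
      rw [if_pos rfl, if_pos rfl, if_neg (Ne.symm d1), if_neg (Ne.symm d2),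
          if_neg (Ne.symm d1), if_neg (Ne.symm d2)]
      ring
    · rw [if_neg h1, if_neg h1]
      by_cases h2 : j = i + 1
      · subst h2
        rw [if_pos rfl, if_pos rfl, if_neg d3, if_neg d3]
        ring
      · rw [if_neg h2, if_neg h2]
        by_cases h3 : j = i - 1
        · subst h3
          rw [if_pos rfl, if_pos rfl]
          ring
        · rw [if_neg h3, if_neg h3]
          ring
  rw [Finset.sum_congr rfl (fun j _ => key j)]
  simp [Finset.sum_add_distrib, Finset.sum_ite_eq', Finset.card_univ, mul_comm]
  ring

/-- The `k × k` cyclic shift-by-one permutation matrix `S`. -/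
noncomputable def shiftMat (k : ℕ) : Matrix (Fin k) (Fin k) ℝ :=
  Matrix.of fun i j => if (j : ℕ) = ((i : ℕ) + 1) % k then 1 else 0

/-- Exact evaluation of the squared Frobenius norm of the residual of the identifiability
quadratic for a perturbed symmetric graphical model: for `k ≥ 3`, with
`γ = (x−1)² − α²` and `e = δ(α−δ)`, the squared Frobenius norm of
`((x−1)²/k²)(O−kI) + (((α−δ)²+δ²)/k)I − (α²/k²)O + ((α−δ)δ/k)(S+Sᵀ)` equals
`(1/k³)[((k−1)γ + 2ke)² + 2(γ+ke)² + (k−3)γ²]`. -/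
theorem perturbed_symmetric_residual_frobenius (k : ℕ) (hk : 3 ≤ k) (α δ x : ℝ) :
    (∑ i : Fin k, ∑ j : Fin k,
        ((((x - 1) ^ 2 / (k : ℝ) ^ 2) •
              (allOnes k - (k : ℝ) • (1 : Matrix (Fin k) (Fin k) ℝ))
            + ((((α - δ) ^ 2 + δ ^ 2)) / k) • (1 : Matrix (Fin k) (Fin k) ℝ)
            - (α ^ 2 / (k : ℝ) ^ 2) • allOnes k
            + ((α - δ) * δ / k) • (shiftMat k + (shiftMat k)ᵀ)) i j) ^ 2)
    = (1 / (k : ℝ) ^ 3) *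
        ((((k : ℝ) - 1) * ((x - 1) ^ 2 - α ^ 2) + 2 * k * (δ * (α - δ))) ^ 2
          + 2 * (((x - 1) ^ 2 - α ^ 2) + k * (δ * (α - δ))) ^ 2
          + ((k : ℝ) - 3) * ((x - 1) ^ 2 - α ^ 2) ^ 2) := by
  haveI : NeZero k := ⟨by omega⟩
  have hk0 : (k : ℝ) ≠ 0 := Nat.cast_ne_zero.mpr (by omega)
  obtain ⟨A, hA⟩ : ∃ A : ℝ, A = ((x - 1) ^ 2 - α ^ 2) / (k : ℝ) ^ 2 := ⟨_, rfl⟩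
  obtain ⟨B, hB⟩ : ∃ B : ℝ, B = (((α - δ) ^ 2 + δ ^ 2) - (x - 1) ^ 2) / (k : ℝ) := ⟨_, rfl⟩
  obtain ⟨C, hC⟩ : ∃ C : ℝ, C = (α - δ) * δ / (k : ℝ) := ⟨_, rfl⟩
  have hf : ∀ i j : Fin k,
      ((((x - 1) ^ 2 / (k : ℝ) ^ 2) •
              (allOnes k - (k : ℝ) • (1 : Matrix (Fin k) (Fin k) ℝ))
            + ((((α - δ) ^ 2 + δ ^ 2)) / k) • (1 : Matrix (Fin k) (Fin k) ℝ)
            - (α ^ 2 / (k : ℝ) ^ 2) • allOnes k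
            + ((α - δ) * δ / k) • (shiftMat k + (shiftMat k)ᵀ)) i j)
      = A + (if j = i then B else 0) + (if j = i + 1 then C else 0)
          + (if j = i - 1 then C else 0) := by
    intro i j
    have v1 : ((i + 1 : Fin k) : ℕ) = ((i : ℕ) + 1) % k := by
      rw [Fin.val_add, Fin.val_one', Nat.mod_eq_of_lt (show 1 < k by omega)]
    have v2 : ((j + 1 : Fin k) : ℕ) = ((j : ℕ) + 1) % k := by
      rw [Fin.val_add, Fin.val_one', Nat.mod_eq_of_lt (show 1 < k by omega)]
    have h2 : ((j : ℕ) = ((i : ℕ) + 1) % k) = (j = i + 1) := by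
      rw [← v1]; exact propext ⟨fun h => Fin.ext h, fun h => congrArg Fin.val h⟩
    have h3 : ((i : ℕ) = ((j : ℕ) + 1) % k) = (j = i - 1) := by
      rw [← v2]
      exact propext ⟨fun h => eq_sub_iff_add_eq.mpr (Fin.ext h).symm,
        fun h => congrArg Fin.val (eq_sub_iff_add_eq.mp h).symm⟩
    simp only [Matrix.add_apply, Matrix.sub_apply, Matrix.smul_apply, Matrix.one_apply,
      Matrix.transpose_apply, allOnes, shiftMat, Matrix.of_apply, smul_eq_mul]
    simp only [h2, h3, hA, hB, hC]
    by_cases h1 : i = j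
    · rw [if_pos h1, if_pos h1.symm]
      split_ifs <;> field_simp <;> ring
    · rw [if_neg h1, if_neg (Ne.symm h1)]
      split_ifs <;> field_simp <;> ring
  calc (∑ i : Fin k, ∑ j : Fin k,
        ((((x - 1) ^ 2 / (k : ℝ) ^ 2) •
              (allOnes k - (k : ℝ) • (1 : Matrix (Fin k) (Fin k) ℝ))
            + ((((α - δ) ^ 2 + δ ^ 2)) / k) • (1 : Matrix (Fin k) (Fin k) ℝ)
            - (α ^ 2 / (k : ℝ) ^ 2) • allOnes k
            + ((α - δ) * δ / k) • (shiftMat k + (shiftMat k)ᵀ)) i j) ^ 2)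
      = ∑ i : Fin k, (k * A ^ 2 + (2*A*B + B^2) + 2*(2*A*C + C^2)) := by
        refine Finset.sum_congr rfl fun i _ => ?_
        rw [Finset.sum_congr rfl fun j _ => by rw [hf i j]]
        exact sum_sq_aux k hk A B C i
    _ = k * (k * A ^ 2 + (2*A*B + B^2) + 2*(2*A*C + C^2)) := by
        rw [Finset.sum_const, Finset.card_univ, Fintype.card_fin, nsmul_eq_mul]
    _ = _ := by
        rw [hA, hB, hC]
        field_simp
        ring
end

section
/- Let α, δ be real numbers with 0 < δ < α < 1. Then α²/4 ≤ α² − 3δ(α−δ) ≤ 1, and consequently there exists x ∈ [0,1] such that (1−x)² = α² − 3δ(α−δ). (This is the k = 3 case of Theorem 3: for support size 3, the identifiability quadratic of a perturbed symmetric graphical model always has a valid solution, so leaf clusters remain unidentifiable.) -/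
/-- For `0 < δ < α < 1` we have `α²/4 ≤ α² − 3δ(α−δ) ≤ 1`, and consequently there exists
`x ∈ [0,1]` with `(1−x)² = α² − 3δ(α−δ)`.  (The `k = 3` case of Theorem 3: the
identifiability quadratic of a perturbed symmetric model always has a valid solution.) -/
theorem perturbed_symmetric_k3_solution (α δ : ℝ)
    (hδ0 : 0 < δ) (hδα : δ < α) (hα1 : α < 1) :
    α ^ 2 / 4 ≤ α ^ 2 - 3 * δ * (α - δ) ∧
    α ^ 2 - 3 * δ * (α - δ) ≤ 1 ∧
    ∃ x : ℝ, 0 ≤ x ∧ x ≤ 1 ∧ (1 - x) ^ 2 = α ^ 2 - 3 * δ * (α - δ) := by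
  have h1 : α ^ 2 / 4 ≤ α ^ 2 - 3 * δ * (α - δ) := by nlinarith [sq_nonneg (α - 2*δ)]
  have h2 : α ^ 2 - 3 * δ * (α - δ) ≤ 1 := by nlinarith
  refine ⟨h1, h2, 1 - Real.sqrt (α ^ 2 - 3 * δ * (α - δ)), ?_, ?_, ?_⟩
  · have : Real.sqrt (α ^ 2 - 3 * δ * (α - δ)) ≤ 1 := by
      rw [show (1:ℝ) = Real.sqrt 1 by simp]
      exact Real.sqrt_le_sqrt h2
    linarith
  · have := Real.sqrt_nonneg (α ^ 2 - 3 * δ * (α - δ)); linarith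
  · ring_nf
    exact Real.sq_sqrt (by nlinarith)
end

section
/- Let a, b, c, d be positive real numbers with a + b + c + d = 1 and a·d ≠ b·c. Then 0 < ab/(a+b) + cd/(c+d) < 1/4, and consequently the quadratic equation x²/4 − x/2 + ab/(a+b) + cd/(c+d) = 0 has a root x with 0 ≤ x < 1. (This is the core computation in Lemma 2: for support size k = 2, the noise-estimation quadratic always admits a valid probability-of-error solution, recovering the unidentifiability of Ising models within leaf clusters.) -/
/-- For positive reals `a, b, c, d` with `a + b + c + d = 1` and `a·d ≠ b·c`, we have
`0 < ab/(a+b) + cd/(c+d) < 1/4`, and consequently the quadratic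
`x²/4 − x/2 + ab/(a+b) + cd/(c+d) = 0` has a root `x ∈ [0,1)`.  (Core computation of
Lemma 2: for support size 2 the noise-estimation quadratic always has a valid solution.) -/
theorem binary_quadratic_has_solution (a b c d : ℝ)
    (ha : 0 < a) (hb : 0 < b) (hc : 0 < c) (hd : 0 < d)
    (hsum : a + b + c + d = 1) (hrank : a * d ≠ b * c) :
    0 < a * b / (a + b) + c * d / (c + d) ∧
    a * b / (a + b) + c * d / (c + d) < 1 / 4 ∧
    ∃ x : ℝ, 0 ≤ x ∧ x < 1 ∧
      x ^ 2 / 4 - x / 2 + (a * b / (a + b) + c * d / (c + d)) = 0 := by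
  have hs : 0 < a + b := by linarith
  have ht : 0 < c + d := by linarith
  set Q := a * b / (a + b) + c * d / (c + d) with hQ
  clear_value Q
  have hQpos : 0 < Q := by rw [hQ]; positivity
  have hne : a ≠ b ∨ c ≠ d := by
    by_contra h
    push_neg at h
    exact hrank (by rw [h.1, h.2])
  have h1 : a * b / (a + b) ≤ (a + b) / 4 := by
    rw [div_le_div_iff₀ hs (by norm_num)]
    nlinarith [sq_nonneg (a - b)]
  have h2 : c * d / (c + d) ≤ (c + d) / 4 := by
    rw [div_le_div_iff₀ ht (by norm_num)]
    nlinarith [sq_nonneg (c - d)]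
  have hQlt : Q < 1 / 4 := by
    rcases hne with h | h
    · have h1' : a * b / (a + b) < (a + b) / 4 := by
        rw [div_lt_div_iff₀ hs (by norm_num)]
        nlinarith [sq_pos_of_ne_zero (sub_ne_zero.mpr h)]
      have : Q < (a + b) / 4 + (c + d) / 4 := by rw [hQ]; linarith
      linarith
    · have h2' : c * d / (c + d) < (c + d) / 4 := by
        rw [div_lt_div_iff₀ ht (by norm_num)]
        nlinarith [sq_pos_of_ne_zero (sub_ne_zero.mpr h)]
      have : Q < (a + b) / 4 + (c + d) / 4 := by rw [hQ]; linarith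
      linarith
  refine ⟨hQpos, hQlt, 1 - Real.sqrt (1 - 4 * Q), ?_, ?_, ?_⟩
  · have : Real.sqrt (1 - 4 * Q) ≤ 1 := Real.sqrt_le_one.mpr (by linarith)
    linarith
  · have : 0 < Real.sqrt (1 - 4 * Q) := Real.sqrt_pos.mpr (by linarith)
    linarith
  · have hsq : Real.sqrt (1 - 4 * Q) ^ 2 = 1 - 4 * Q :=
      Real.sq_sqrt (by linarith)
    nlinarith [hsq]
end

section
/- Let k ≥ 2 and let M be a k×k real matrix with nonnegative entries summing to 1. Let c > 0 and suppose |det(M)| ≥ c. Then every complex eigenvalue λ of M satisfies |λ| ≥ c·(k−1)^{k−1}. (This is the lower-bound part of the paper's eigenvalue lemma, used to lower bound the minimum absolute eigenvalue of an empirical joint PMF matrix and hence upper bound the spectral norm of its inverse.) -/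
open Finset Matrix Polynomial Module.End

/-!
If `μ ≠ 0` is an eigenvalue of `M`, then `det M / μ` is an eigenvalue of the adjugate, so by
Gershgorin's theorem `|det M| / |μ|` is at most an absolute row sum of `adj M`. Expanding the
cofactors over permutations bounds the `i`-th absolute row sum of `adj M` by the product of the
`k - 1` column sums of `M` other than the `i`-th, and since all column sums add up to `1`, AM–GM
bounds that product by `(k - 1)^{-(k - 1)}`.
-/

theorem Real.prod_le_arith_mean_pow {ι : Type*} (s : Finset ι) (f : ι → ℝ)
    (hf : ∀ i ∈ s, 0 ≤ f i) : ∏ i ∈ s, f i ≤ ((∑ i ∈ s, f i) / #s) ^ #s := by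
  rcases s.eq_empty_or_nonempty with rfl | hs
  · simp
  have hP : 0 ≤ ∏ i ∈ s, f i := prod_nonneg hf
  have hcard : #s ≠ 0 := hs.card_pos.ne'
  have amgm := Real.geom_mean_le_arith_mean s (fun _ ↦ 1) f (fun _ _ ↦ zero_le_one)
    (by simpa using hs.card_pos) hf
  simp only [Real.rpow_one, sum_const, nsmul_eq_mul, mul_one, one_mul] at amgm
  calc ∏ i ∈ s, f i = ((∏ i ∈ s, f i) ^ ((#s : ℝ)⁻¹)) ^ #s :=
        (Real.rpow_inv_natCast_pow hP hcard).symm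
    _ ≤ ((∑ i ∈ s, f i) / #s) ^ #s := by gcongr

theorem Equiv.Perm.eq_of_forall_ne_apply_eq {α : Type*} {σ τ : Equiv.Perm α} (j : α)
    (h : ∀ i ≠ j, σ i = τ i) : σ = τ := by
  refine Equiv.ext fun i ↦ ?_
  by_cases hi : i = j
  · subst hi
    by_contra hne
    obtain ⟨i', hτ⟩ := τ.surjective (σ i)
    have hi' : i' ≠ i := by
      rintro rfl
      exact hne hτ.symm
    exact hi' (σ.injective (by rw [h i' hi', hτ]))
  · exact h i hi

theorem Matrix.abs_det_le_sum_prod_abs {n R : Type*} [Fintype n] [DecidableEq n] [CommRing R]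
    [LinearOrder R] [IsStrictOrderedRing R] (A : Matrix n n R) :
    |A.det| ≤ ∑ σ : Equiv.Perm n, ∏ i, |A i (σ i)| :=
  calc |A.det| = |∑ σ : Equiv.Perm n, (Equiv.Perm.sign σ : R) * ∏ i, A i (σ i)| := by
        rw [← det_transpose, det_apply']; rfl
    _ ≤ ∑ σ : Equiv.Perm n, |(Equiv.Perm.sign σ : R) * ∏ i, A i (σ i)| :=
        abs_sum_le_sum_abs _ _
    _ = ∑ σ : Equiv.Perm n, ∏ i, |A i (σ i)| := by
        simp only [abs_mul, abs_unit_intCast, one_mul, abs_prod]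

theorem sum_perm_prod_erase_le_prod_sum {n R : Type*} [Fintype n] [DecidableEq n]
    [CommSemiring R] [PartialOrder R] [IsOrderedRing R] (f : n → n → R)
    (hf : ∀ i c, 0 ≤ f i c) (j : n) :
    ∑ σ : Equiv.Perm n, ∏ i ∈ univ.erase j, f i (σ i) ≤
      ∏ i ∈ univ.erase j, ∑ c, f i c := by
  have hsub (g : n → R) : ∏ i ∈ univ.erase j, g i = ∏ i : {i // i ≠ j}, g i :=
    prod_subtype _ (by simp) g
  let restrict (σ : Equiv.Perm n) : {i // i ≠ j} → n := fun i ↦ σ i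
  have hinj : Set.InjOn restrict (univ : Finset (Equiv.Perm n)) := fun σ _ τ _ h ↦
    Equiv.Perm.eq_of_forall_ne_apply_eq j fun i hi ↦ congrFun h ⟨i, hi⟩
  calc ∑ σ : Equiv.Perm n, ∏ i ∈ univ.erase j, f i (σ i)
      = ∑ σ : Equiv.Perm n, ∏ i : {i // i ≠ j}, f i (restrict σ i) := by
        simp only [hsub]; rfl
    _ = ∑ x ∈ univ.image restrict, ∏ i : {i // i ≠ j}, f i (x i) :=
        (sum_image (f := fun x ↦ ∏ i : {i // i ≠ j}, f i (x i)) hinj).symm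
    _ ≤ ∑ x : {i // i ≠ j} → n, ∏ i : {i // i ≠ j}, f i (x i) :=
        sum_le_univ_sum_of_nonneg fun x ↦ prod_nonneg fun i _ ↦ hf i (x i)
    _ = ∏ i ∈ univ.erase j, ∑ c, f i c := by rw [hsub, Fintype.prod_sum]

theorem Matrix.sum_abs_adjugate_col_le {n : Type*} [Fintype n] [DecidableEq n]
    (M : Matrix n n ℝ) (j : n) :
    ∑ i, |M.adjugate i j| ≤ ∏ r ∈ univ.erase j, ∑ c, |M r c| := by
  have hprod (i : n) (σ : Equiv.Perm n) :
      ∏ r, |M.updateRow j (Pi.single i 1) r (σ r)| =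
        |Pi.single (M := fun _ ↦ ℝ) i 1 (σ j)| * ∏ r ∈ univ.erase j, |M r (σ r)| := by
    rw [← mul_prod_erase univ _ (mem_univ j), updateRow_self]
    congr 1
    refine prod_congr rfl fun r hr ↦ ?_
    rw [updateRow_ne (ne_of_mem_erase hr)]
  -- each permutation `σ` contributes to the single entry `i = σ j` of the column
  calc ∑ i, |M.adjugate i j|
      ≤ ∑ i, ∑ σ : Equiv.Perm n, |Pi.single (M := fun _ ↦ ℝ) i 1 (σ j)| *
          ∏ r ∈ univ.erase j, |M r (σ r)| := by
        gcongr with i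
        rw [adjugate_apply]
        simpa only [hprod] using abs_det_le_sum_prod_abs (M.updateRow j (Pi.single i 1))
    _ = ∑ σ : Equiv.Perm n, ∏ r ∈ univ.erase j, |M r (σ r)| := by
        rw [sum_comm]
        refine sum_congr rfl fun σ _ ↦ ?_
        simp [Pi.single_apply, apply_ite (abs : ℝ → ℝ)]
    _ ≤ ∏ r ∈ univ.erase j, ∑ c, |M r c| :=
        sum_perm_prod_erase_le_prod_sum (fun r c ↦ |M r c|) (fun _ _ ↦ abs_nonneg _) j

theorem Matrix.sum_abs_adjugate_row_le {n : Type*} [Fintype n] [DecidableEq n]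
    (M : Matrix n n ℝ) (i : n) :
    ∑ j, |M.adjugate i j| ≤ ∏ c ∈ univ.erase i, ∑ r, |M r c| := by
  simpa [← adjugate_transpose] using sum_abs_adjugate_col_le Mᵀ i

theorem Matrix.sum_abs_adjugate_row_le_of_sum_eq_one {n : Type*} [Fintype n] [DecidableEq n]
    (M : Matrix n n ℝ) (hnn : ∀ i j, 0 ≤ M i j) (hsum : ∑ i, ∑ j, M i j = 1) (i : n) :
    ∑ j, |M.adjugate i j| ≤ 1 / ((Fintype.card n - 1 : ℕ) : ℝ) ^ (Fintype.card n - 1) := by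
  have hcard : #(univ.erase i) = Fintype.card n - 1 := by
    rw [card_erase_of_mem (mem_univ i), card_univ]
  have hcol_nonneg (c : n) : 0 ≤ ∑ r, M r c := sum_nonneg fun r _ ↦ hnn r c
  have hcol : ∑ c ∈ univ.erase i, ∑ r, M r c ≤ 1 :=
    calc ∑ c ∈ univ.erase i, ∑ r, M r c ≤ ∑ c, ∑ r, M r c :=
          sum_le_univ_sum_of_nonneg hcol_nonneg
      _ = 1 := by rw [sum_comm, hsum]
  calc ∑ j, |M.adjugate i j| ≤ ∏ c ∈ univ.erase i, ∑ r, M r c := by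
        simpa only [abs_of_nonneg (hnn _ _)] using sum_abs_adjugate_row_le M i
    _ ≤ ((∑ c ∈ univ.erase i, ∑ r, M r c) / #(univ.erase i)) ^ #(univ.erase i) :=
        Real.prod_le_arith_mean_pow _ _ fun c _ ↦ hcol_nonneg c
    _ ≤ (1 / #(univ.erase i)) ^ #(univ.erase i) := by
        have := sum_nonneg fun c (_ : c ∈ univ.erase i) ↦ hcol_nonneg c
        gcongr
    _ = 1 / ((Fintype.card n - 1 : ℕ) : ℝ) ^ (Fintype.card n - 1) := by
        rw [hcard, div_pow, one_pow]

theorem Matrix.exists_norm_le_sum_norm_of_hasEigenvalue {n K : Type*} [Fintype n]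
    [DecidableEq n] [NormedField K] {A : Matrix n n K} {μ : K}
    (hμ : HasEigenvalue (toLin' A) μ) : ∃ i, ‖μ‖ ≤ ∑ j, ‖A i j‖ := by
  obtain ⟨i, hi⟩ := eigenvalue_mem_ball hμ
  refine ⟨i, ?_⟩
  rw [← add_sum_erase _ _ (mem_univ i)]
  calc ‖μ‖ ≤ ‖A i i‖ + ‖μ - A i i‖ := norm_le_insert' μ (A i i)
    _ ≤ _ := by gcongr; exact mem_closedBall_iff_norm.mp hi

theorem Matrix.hasEigenvalue_adjugate {n K : Type*} [Fintype n] [DecidableEq n] [Field K]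
    {A : Matrix n n K} {μ : K} (hμ : HasEigenvalue (toLin' A) μ) (hμ0 : μ ≠ 0) :
    HasEigenvalue (toLin' A.adjugate) (A.det / μ) := by
  obtain ⟨v, hv, hv0⟩ := hμ.exists_hasEigenvector
  rw [mem_eigenspace_iff, toLin'_apply] at hv
  refine hasEigenvalue_of_hasEigenvector ⟨?_, hv0⟩
  rw [mem_eigenspace_iff, toLin'_apply]
  have h := congrArg (A.adjugate *ᵥ ·) hv
  simp only [mulVec_mulVec, adjugate_mul, mulVec_smul, smul_mulVec, one_mulVec] at h
  rw [div_eq_inv_mul, mul_smul, h, smul_smul, inv_mul_cancel₀ hμ0, one_smul]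

theorem eigenvalue_lower_bound_general (k : ℕ)
    (M : Matrix (Fin k) (Fin k) ℝ)
    (hnn : ∀ i j, 0 ≤ M i j) (hsum : ∑ i, ∑ j, M i j = 1)
    (c : ℝ) (hdet : c ≤ |M.det|) :
    ∀ μ : ℂ, (M.map (Complex.ofReal)).charpoly.IsRoot μ →
      c * ((k : ℝ) - 1) ^ (k - 1) ≤ ‖μ‖ := by
  intro μ hμ
  have hk : 0 < k := Nat.pos_of_ne_zero (by rintro rfl; simp at hsum)
  rw [← Nat.cast_pred hk]
  set A := M.map Complex.ofReal
  have hdetA : A.det = M.det := (Complex.ofRealHom.map_det M).symm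
  have hadjA : A.adjugate = M.adjugate.map Complex.ofReal :=
    (Complex.ofRealHom.map_adjugate M).symm
  rcases eq_or_ne μ 0 with rfl | hμ0
  · have hM0 : M.det = 0 := by
      rw [← Complex.ofReal_eq_zero, ← hdetA, det_eq_sign_charpoly_coeff,
        coeff_zero_eq_eval_zero, hμ.eq_zero, mul_zero]
    rw [hM0, abs_zero] at hdet
    simpa using mul_nonpos_of_nonpos_of_nonneg hdet (by positivity)
  have hev : HasEigenvalue (toLin' A) μ := by
    rwa [hasEigenvalue_iff_isRoot_charpoly, charpoly_toLin']
  obtain ⟨i, hi⟩ := exists_norm_le_sum_norm_of_hasEigenvalue (hasEigenvalue_adjugate hev hμ0)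
  have key : |M.det| / ‖μ‖ ≤ 1 / ((k - 1 : ℕ) : ℝ) ^ (k - 1) :=
    calc |M.det| / ‖μ‖ = ‖A.det / μ‖ := by
          rw [norm_div, hdetA, Complex.norm_real, Real.norm_eq_abs]
    _ ≤ ∑ j, ‖A.adjugate i j‖ := hi
    _ = ∑ j, |M.adjugate i j| := by simp [hadjA, Complex.norm_real]
    _ ≤ _ := by simpa using sum_abs_adjugate_row_le_of_sum_eq_one M hnn hsum i
  have hpow : (0 : ℝ) < ((k - 1 : ℕ) : ℝ) ^ (k - 1) := by exact_mod_cast Nat.pow_self_pos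
  rw [div_le_div_iff₀ (norm_pos_iff.mpr hμ0) hpow, one_mul] at key
  calc c * ((k - 1 : ℕ) : ℝ) ^ (k - 1) ≤ |M.det| * ((k - 1 : ℕ) : ℝ) ^ (k - 1) := by
        gcongr
    _ ≤ ‖μ‖ := key

/-- Let `k ≥ 2` and let `M` be a `k × k` real matrix with nonnegative entries summing
to 1, and suppose `|det M| ≥ c` with `c > 0`.  Then every complex eigenvalue `μ` of `M`
(i.e. every root of the characteristic polynomial of `M` over `ℂ`) satisfies
`|μ| ≥ c·(k−1)^{k−1}`. -/
theorem eigenvalue_lower_bound (k : ℕ) (hk : 2 ≤ k)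
    (M : Matrix (Fin k) (Fin k) ℝ)
    (hnn : ∀ i j, 0 ≤ M i j) (hsum : ∑ i, ∑ j, M i j = 1)
    (c : ℝ) (hc : 0 < c) (hdet : c ≤ |M.det|) :
    ∀ μ : ℂ, (M.map (Complex.ofReal)).charpoly.IsRoot μ →
      c * ((k : ℝ) - 1) ^ (k - 1) ≤ ‖μ‖ :=
  eigenvalue_lower_bound_general k M hnn hsum c hdet
end

section
/- Let k ≥ 2 and let M be a k×k real matrix with nonnegative entries. Then the sum of the absolute values of the complex eigenvalues of M, counted with multiplicity, is at most the sum of all entries of M. (This spectral bound is the key step in the paper's eigenvalue lemma for joint PMF matrices.) -/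
/-!
By Schur triangulation, `M = U T Uᴴ` with `U` unitary and `T` upper triangular, so the
eigenvalues are the diagonal entries `T i i = ∑ a b, conj (U a i) * M a b * U b i`. Hence
`∑ i, |T i i| ≤ ∑ a b, |M a b| * ∑ i, |U a i| |U b i|`, and the inner sum is at most `1`
by AM-GM, because the rows of `U` are unit vectors.
-/

open Polynomial Finset

namespace Matrix

section Unitary

variable {𝕜 n : Type*} [RCLike 𝕜] [Fintype n] [DecidableEq n] {U : Matrix n n 𝕜}

theorem sum_norm_sq_row_eq_one (hU : U ∈ unitaryGroup n 𝕜) (a : n) :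
    ∑ i, ‖U a i‖ ^ 2 = 1 := by
  have h : (U * star U) a a = 1 := by rw [mem_unitaryGroup_iff.mp hU, one_apply_eq]
  simp only [mul_apply, star_apply, ← starRingEnd_apply, RCLike.mul_conj] at h
  exact_mod_cast h

theorem sum_norm_mul_norm_row_le_one (hU : U ∈ unitaryGroup n 𝕜) (a b : n) :
    ∑ i, ‖U a i‖ * ‖U b i‖ ≤ 1 := by
  have hamgm : ∀ i, ‖U a i‖ * ‖U b i‖ ≤ (‖U a i‖ ^ 2 + ‖U b i‖ ^ 2) / 2 := fun i => by
    nlinarith [sq_nonneg (‖U a i‖ - ‖U b i‖)]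
  calc ∑ i, ‖U a i‖ * ‖U b i‖ ≤ ∑ i, (‖U a i‖ ^ 2 + ‖U b i‖ ^ 2) / 2 :=
        sum_le_sum fun i _ => hamgm i
    _ = 1 := by
      rw [← sum_div, sum_add_distrib, sum_norm_sq_row_eq_one hU, sum_norm_sq_row_eq_one hU]
      norm_num

theorem sum_norm_diag_star_mul_mul_le (hU : U ∈ unitaryGroup n 𝕜) (M : Matrix n n 𝕜) :
    ∑ i, ‖(star U * M * U) i i‖ ≤ ∑ a, ∑ b, ‖M a b‖ := by
  have hentry : ∀ i, (star U * M * U) i i = ∑ a, ∑ b, star (U a i) * M a b * U b i := fun i => by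
    simp only [mul_apply, star_apply, sum_mul]
    exact sum_comm
  calc ∑ i, ‖(star U * M * U) i i‖ ≤ ∑ i, ∑ a, ∑ b, ‖U a i‖ * ‖M a b‖ * ‖U b i‖ := by
        refine sum_le_sum fun i _ => (hentry i ▸ norm_sum_le _ _).trans <|
          sum_le_sum fun a _ => (norm_sum_le _ _).trans_eq <| sum_congr rfl fun b _ => ?_
        rw [norm_mul, norm_mul, norm_star]
    _ = ∑ a, ∑ b, ‖M a b‖ * ∑ i, ‖U a i‖ * ‖U b i‖ := by
        rw [sum_comm]
        refine sum_congr rfl fun a _ => ?_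
        rw [sum_comm]
        simp only [mul_sum]
        refine sum_congr rfl fun b _ => sum_congr rfl fun i _ => by ring
    _ ≤ ∑ a, ∑ b, ‖M a b‖ := sum_le_sum fun a _ => sum_le_sum fun b _ =>
        mul_le_of_le_one_right (norm_nonneg _) (sum_norm_mul_norm_row_le_one hU a b)

theorem exists_mem_unitaryGroup_apply_eq (w : EuclideanSpace 𝕜 n) (hw : ‖w‖ = 1) (j : n) :
    ∃ U ∈ unitaryGroup n 𝕜, ∀ i, U i j = w i := by
  have hw' : Orthonormal 𝕜 (({j} : Set n).domRestrict fun _ => w) := by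
    rw [orthonormal_iff_ite]
    rintro ⟨i, rfl⟩ ⟨i', rfl⟩
    simp [inner_self_eq_norm_sq_to_K, hw]
  obtain ⟨b, hb⟩ := hw'.exists_orthonormalBasis_extension_of_card_eq (by simp)
  refine ⟨_, (EuclideanSpace.basisFun n 𝕜).toMatrix_orthonormalBasis_mem_unitary b, fun i => ?_⟩
  simp [Module.Basis.toMatrix_apply, hb j rfl]

theorem exists_mem_unitaryGroup_star_mul_mul_apply_eq_zero [IsAlgClosed 𝕜] (M : Matrix n n 𝕜)
    (j : n) : ∃ U ∈ unitaryGroup n 𝕜, ∀ i ≠ j, (star U * M * U) i j = 0 := by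
  have : Nonempty n := ⟨j⟩
  obtain ⟨μ, hμ⟩ := Module.End.exists_eigenvalue (toEuclideanLin M)
  obtain ⟨v, hv⟩ := hμ.exists_hasEigenvector
  set w := (‖v‖⁻¹ : 𝕜) • v
  have hMw : M *ᵥ w = μ • w := by
    have := congrArg WithLp.ofLp (hv.apply_eq_smul)
    simp only [ofLp_toLpLin, toLin'_apply, WithLp.ofLp_smul] at this
    simp only [w, WithLp.ofLp_smul, mulVec_smul, this, smul_comm μ]
  obtain ⟨U, hU, hUw⟩ := exists_mem_unitaryGroup_apply_eq w (norm_smul_inv_norm hv.2) j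
  have hcol : U *ᵥ Pi.single j 1 = w := by
    ext i
    simp [hUw]
  have hconj : (star U * M * U) *ᵥ Pi.single j 1 = μ • Pi.single j 1 := by
    rw [← mulVec_mulVec, hcol, ← mulVec_mulVec, hMw, mulVec_smul, ← hcol, mulVec_mulVec,
      mem_unitaryGroup_iff'.mp hU, one_mulVec]
  refine ⟨U, hU, fun i hi => ?_⟩
  simpa [mulVec_single_one, hi] using congrFun hconj i

end Unitary

section FromBlocksOne

variable {α : Type*} {m : ℕ}

/-- The block-diagonal matrix `diag(1, V)`. -/
def fromBlocksOne [Zero α] [One α] (V : Matrix (Fin m) (Fin m) α) :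
    Matrix (Fin (m + 1)) (Fin (m + 1)) α :=
  of fun i j => Fin.cases (Fin.cases 1 0 j) (fun i' => Fin.cases 0 (V i') j) i

section Entries

variable [Zero α] [One α] (V : Matrix (Fin m) (Fin m) α) (i j : Fin m)

@[simp] theorem fromBlocksOne_zero_zero : fromBlocksOne V 0 0 = 1 := rfl
@[simp] theorem fromBlocksOne_zero_succ : fromBlocksOne V 0 j.succ = 0 := rfl
@[simp] theorem fromBlocksOne_succ_zero : fromBlocksOne V i.succ 0 = 0 := rfl
@[simp] theorem fromBlocksOne_succ_succ : fromBlocksOne V i.succ j.succ = V i j := rfl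

end Entries

variable [Semiring α]

theorem fromBlocksOne_one : fromBlocksOne (1 : Matrix (Fin m) (Fin m) α) = 1 := by
  ext i j
  cases i using Fin.cases <;> cases j using Fin.cases <;>
    simp [one_apply, (Fin.succ_ne_zero _).symm]

theorem fromBlocksOne_mul (A B : Matrix (Fin m) (Fin m) α) :
    fromBlocksOne A * fromBlocksOne B = fromBlocksOne (A * B) := by
  ext i j
  cases i using Fin.cases <;> cases j using Fin.cases <;> simp [mul_apply, Fin.sum_univ_succ]

theorem star_fromBlocksOne [StarRing α] (V : Matrix (Fin m) (Fin m) α) :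
    star (fromBlocksOne V) = fromBlocksOne (star V) := by
  ext i j
  cases i using Fin.cases <;> cases j using Fin.cases <;> simp

theorem fromBlocksOne_mul_mul_succ_zero (A B : Matrix (Fin m) (Fin m) α)
    (X : Matrix (Fin (m + 1)) (Fin (m + 1)) α) (i : Fin m) :
    (fromBlocksOne A * X * fromBlocksOne B) i.succ 0 = ∑ k, A i k * X k.succ 0 := by
  simp [mul_apply, Fin.sum_univ_succ]

theorem submatrix_succ_fromBlocksOne_mul_mul (A B : Matrix (Fin m) (Fin m) α)
    (X : Matrix (Fin (m + 1)) (Fin (m + 1)) α) :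
    (fromBlocksOne A * X * fromBlocksOne B).submatrix Fin.succ Fin.succ =
      A * X.submatrix Fin.succ Fin.succ * B := by
  ext i j
  simp [mul_apply, Fin.sum_univ_succ, sum_mul]

end FromBlocksOne

theorem fromBlocksOne_mem_unitaryGroup {α : Type*} [CommRing α] [StarRing α] {m : ℕ}
    {V : Matrix (Fin m) (Fin m) α} (hV : V ∈ unitaryGroup (Fin m) α) :
    fromBlocksOne V ∈ unitaryGroup (Fin (m + 1)) α := by
  rw [mem_unitaryGroup_iff', star_fromBlocksOne, fromBlocksOne_mul, mem_unitaryGroup_iff'.mp hV,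
    fromBlocksOne_one]

theorem exists_mem_unitaryGroup_isUpperTriangular {𝕜 : Type*} [RCLike 𝕜] [IsAlgClosed 𝕜] :
    ∀ {n : ℕ} (M : Matrix (Fin n) (Fin n) 𝕜),
      ∃ U ∈ unitaryGroup (Fin n) 𝕜, (star U * M * U).IsUpperTriangular
  | 0, _ => ⟨1, one_mem _, fun i => i.elim0⟩
  | _ + 1, M => by
    obtain ⟨U, hU, hcol⟩ := exists_mem_unitaryGroup_star_mul_mul_apply_eq_zero M 0
    set N := star U * M * U
    obtain ⟨V, hV, hVN⟩ :=
      exists_mem_unitaryGroup_isUpperTriangular (N.submatrix Fin.succ Fin.succ)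
    refine ⟨U * fromBlocksOne V, mul_mem hU (fromBlocksOne_mem_unitaryGroup hV), ?_⟩
    have hconj : star (U * fromBlocksOne V) * M * (U * fromBlocksOne V) =
        fromBlocksOne (star V) * N * fromBlocksOne V := by
      simp only [N, star_mul, star_fromBlocksOne, Matrix.mul_assoc]
    rw [hconj]
    intro i j hji
    cases i using Fin.cases with
    | zero => exact absurd hji (Fin.not_lt_zero _)
    | succ i =>
      cases j using Fin.cases with
      | zero =>
        rw [fromBlocksOne_mul_mul_succ_zero]
        exact sum_eq_zero fun k _ => by rw [hcol _ k.succ_ne_zero, mul_zero]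
      | succ j =>
        have := hVN (Fin.succ_lt_succ_iff.mp hji)
        rwa [← submatrix_succ_fromBlocksOne_mul_mul] at this

theorem charpoly_star_mul_mul {R n : Type*} [CommRing R] [StarRing R] [Fintype n]
    [DecidableEq n] {U : Matrix n n R} (hU : U ∈ unitaryGroup n R) (M : Matrix n n R) :
    (star U * M * U).charpoly = M.charpoly := by
  rw [charpoly_mul_comm, ← Matrix.mul_assoc, mem_unitaryGroup_iff.mp hU, Matrix.one_mul]

theorem roots_charpoly_of_isUpperTriangular {R n : Type*} [CommRing R] [IsDomain R] [Fintype n]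
    [DecidableEq n] [LinearOrder n] {T : Matrix n n R} (hT : T.IsUpperTriangular) :
    T.charpoly.roots = univ.val.map fun i => T i i := by
  rw [charpoly_of_isUpperTriangular T hT, ← roots_multiset_prod_X_sub_C (univ.val.map _),
    Multiset.map_map]
  rfl

end Matrix

open Matrix in
theorem sum_abs_eigenvalues_le_sum_entries_general (k : ℕ)
    (M : Matrix (Fin k) (Fin k) ℝ) (hnn : ∀ i j, 0 ≤ M i j) :
    (((M.map (Complex.ofReal)).charpoly.roots).map (fun z : ℂ => ‖z‖)).sum
      ≤ ∑ i, ∑ j, M i j := by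
  obtain ⟨U, hU, hT⟩ := exists_mem_unitaryGroup_isUpperTriangular (M.map Complex.ofReal)
  rw [← charpoly_star_mul_mul hU, roots_charpoly_of_isUpperTriangular hT, Multiset.map_map]
  calc _ = ∑ i, ‖(star U * M.map Complex.ofReal * U) i i‖ := rfl
    _ ≤ ∑ i, ∑ j, ‖M.map Complex.ofReal i j‖ := sum_norm_diag_star_mul_mul_le hU _
    _ = ∑ i, ∑ j, M i j := by simp [abs_of_nonneg (hnn _ _)]

/-- Let `k ≥ 2` and let `M` be a `k × k` real matrix with nonnegative entries.  Then the
sum of the absolute values of the complex eigenvalues of `M` (the roots of its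
characteristic polynomial over `ℂ`, counted with multiplicity) is at most the sum of
all entries of `M`. -/
theorem sum_abs_eigenvalues_le_sum_entries (k : ℕ) (hk : 2 ≤ k)
    (M : Matrix (Fin k) (Fin k) ℝ) (hnn : ∀ i j, 0 ≤ M i j) :
    (((M.map (Complex.ofReal)).charpoly.roots).map (fun z : ℂ => ‖z‖)).sum
      ≤ ∑ i, ∑ j, M i j :=
  sum_abs_eigenvalues_le_sum_entries_general k M hnn
end

section
/- Let k ≥ 2 and let c be a real number with 0 < c ≤ k^{−k}. Then there exists a unique λ ∈ (0, 1/k] with λ·((1−λ)/(k−1))^{k−1} = c, and this λ satisfies c·(k−1)^{k−1} ≤ λ ≤ c·k^{k−1}. (This is the analysis of the scalar optimization problem arising in the paper's eigenvalue lemma: the map λ ↦ λ((1−λ)/(k−1))^{k−1} is strictly increasing on (0, 1/k], takes value 0 at λ = 0 and k^{−k} at λ = 1/k.) -/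
/-!
With `n = k - 1`, the map `x ↦ x ((1 - x)/n)^n` is strictly increasing on `[0, 1/(n+1)]` (its
derivative carries the factor `1 - (n+1)x`) and runs from `0` to `(n+1)^(-(n+1))`, so the
intermediate value theorem gives the solution and monotonicity its uniqueness. The bounds on it
come from `1/(n+1) ≤ (1 - x)/n ≤ 1/n` on that interval.
-/

open Set

noncomputable section

/-- The product of `n + 1` nonnegative numbers with sum `1` when one of them is `x` and the other
`n` are equal. -/
def balancedProduct (n : ℕ) (x : ℝ) : ℝ := x * ((1 - x) / n) ^ n

namespace balancedProduct

variable {n : ℕ}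

@[simp] lemma apply_zero (n : ℕ) : balancedProduct n 0 = 0 := by simp [balancedProduct]

lemma continuous (n : ℕ) : Continuous (balancedProduct n) := by
  unfold balancedProduct; fun_prop

lemma hasDerivAt (hn : 0 < n) (x : ℝ) :
    HasDerivAt (balancedProduct n) (((1 - x) / n) ^ (n - 1) * ((1 - (n + 1) * x) / n)) x := by
  have hbase : HasDerivAt (fun x : ℝ => (1 - x) / n) (-1 / n) x := by
    simpa using ((hasDerivAt_id x).const_sub 1).div_const (n : ℝ)
  refine ((hasDerivAt_id' x).mul (hbase.pow n)).congr_deriv ?_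
  have hn' : (n : ℝ) ≠ 0 := by positivity
  rw [← pow_sub_one_mul hn.ne']
  simp only [Pi.mul_apply, Pi.pow_apply]
  field_simp
  ring

lemma strictMonoOn (hn : 0 < n) : StrictMonoOn (balancedProduct n) (Icc 0 (1 / (n + 1))) := by
  refine strictMonoOn_of_deriv_pos (convex_Icc _ _) (continuous n).continuousOn fun x hx ↦ ?_
  rw [interior_Icc] at hx
  have hx' : (n + 1) * x < 1 := by
    have := hx.2; rw [lt_div_iff₀ (by positivity)] at this; linarith
  have hx1 : x < 1 := by nlinarith [hx.1]
  have hn' : (0 : ℝ) < n := by exact_mod_cast hn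
  rw [(hasDerivAt hn x).deriv]
  exact mul_pos (pow_pos (div_pos (by linarith) hn') _) (div_pos (by linarith) hn')

lemma apply_inv_succ (hn : 0 < n) : balancedProduct n (1 / (n + 1)) = (1 / (n + 1)) ^ (n + 1) := by
  have hn' : (n : ℝ) ≠ 0 := by positivity
  have : (1 - 1 / ((n : ℝ) + 1)) / n = 1 / (n + 1) := by field_simp; ring
  rw [balancedProduct, this, pow_succ']

lemma mul_pow_le {x : ℝ} (hx0 : 0 ≤ x) (hx1 : x ≤ 1) : balancedProduct n x * n ^ n ≤ x := by
  rcases n.eq_zero_or_pos with rfl | hn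
  · simp [balancedProduct]
  have hn' : (n : ℝ) ^ n ≠ 0 := by positivity
  calc balancedProduct n x * n ^ n = x * (1 - x) ^ n := by
        rw [balancedProduct, div_pow, mul_assoc, div_mul_cancel₀ _ hn']
    _ ≤ x * 1 := by gcongr; exact pow_le_one₀ (by linarith) (by linarith)
    _ = x := mul_one x

lemma le_mul_pow (hn : 0 < n) {x : ℝ} (hx0 : 0 ≤ x) (hx1 : x ≤ 1 / (n + 1)) :
    x ≤ balancedProduct n x * (n + 1) ^ n := by
  have hbase : 1 / ((n : ℝ) + 1) ≤ (1 - x) / n := by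
    rw [div_le_div_iff₀ (by positivity) (by exact_mod_cast hn)]
    rw [le_div_iff₀ (by positivity)] at hx1
    nlinarith
  calc x = x * ((1 / (n + 1)) ^ n * (n + 1) ^ n) := by
        rw [← mul_pow, one_div_mul_cancel (by positivity), one_pow, mul_one]
    _ ≤ x * (((1 - x) / n) ^ n * (n + 1) ^ n) := by gcongr
    _ = balancedProduct n x * (n + 1) ^ n := by rw [balancedProduct, mul_assoc]

lemma existsUnique_eq (hn : 0 < n) {c : ℝ} (hc0 : 0 < c) (hc1 : c ≤ (1 / (n + 1)) ^ (n + 1)) :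
    ∃! x : ℝ, x ∈ Ioc 0 (1 / ((n : ℝ) + 1)) ∧ balancedProduct n x = c := by
  have hc : c ∈ Icc (balancedProduct n 0) (balancedProduct n (1 / (n + 1))) := by
    rw [apply_zero, apply_inv_succ hn]; exact ⟨hc0.le, hc1⟩
  obtain ⟨x, hx, rfl⟩ := intermediate_value_Icc (by positivity) (continuous n).continuousOn hc
  have hx0 : x ≠ 0 := by rintro rfl; simp at hc0
  refine ⟨x, ⟨⟨lt_of_le_of_ne hx.1 (Ne.symm hx0), hx.2⟩, rfl⟩, fun y ⟨hy, hyx⟩ ↦ ?_⟩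
  exact (strictMonoOn hn).injOn (Ioc_subset_Icc_self hy) hx hyx

end balancedProduct

end

/-- Let `k ≥ 2` and `0 < c ≤ k^{−k}`.  Then there is a unique `λ ∈ (0, 1/k]` with
`λ·((1−λ)/(k−1))^{k−1} = c`, and this `λ` satisfies
`c·(k−1)^{k−1} ≤ λ ≤ c·k^{k−1}`. -/
theorem scalar_eigenvalue_characterization (k : ℕ) (hk : 2 ≤ k)
    (c : ℝ) (hc0 : 0 < c) (hc1 : c ≤ (1 / (k : ℝ)) ^ k) :
    ∃ lam : ℝ,
      (0 < lam ∧ lam ≤ 1 / (k : ℝ) ∧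
        lam * ((1 - lam) / ((k : ℝ) - 1)) ^ (k - 1) = c ∧
        c * ((k : ℝ) - 1) ^ (k - 1) ≤ lam ∧ lam ≤ c * (k : ℝ) ^ (k - 1)) ∧
      ∀ mu : ℝ, 0 < mu → mu ≤ 1 / (k : ℝ) →
        mu * ((1 - mu) / ((k : ℝ) - 1)) ^ (k - 1) = c → mu = lam := by
  obtain ⟨n, rfl⟩ : ∃ n, k = n + 1 := ⟨k - 1, by omega⟩
  have hn : 0 < n := by omega
  simp only [Nat.add_sub_cancel, Nat.cast_succ, add_sub_cancel_right] at hc1 ⊢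
  obtain ⟨lam, ⟨hlam, rfl⟩, huniq⟩ := balancedProduct.existsUnique_eq hn hc0 hc1
  have hlam1 : lam ≤ 1 := hlam.2.trans (div_le_one_of_le₀ (by linarith) (by positivity))
  refine ⟨lam, ⟨hlam.1, hlam.2, rfl, balancedProduct.mul_pow_le hlam.1.le hlam1,
    balancedProduct.le_mul_pow hn hlam.1.le hlam.2⟩, fun mu hmu0 hmu1 hmu ↦ huniq mu ⟨⟨hmu0, hmu1⟩, hmu⟩⟩
end

section
/- Let M be a 3×3 real matrix with nonnegative entries such that every row sums to 1 and every column sums to 1 (M is doubly stochastic). Suppose all three columns of M have the same Euclidean norm, and all three pairwise inner products between distinct columns are equal. Then every column of M is a cyclic shift of the first column: for each column index j there exists m ∈ {0,1,2} such that M_{i,j} = M_{(i+m) mod 3, 0} for all i. (This is the key geometric step proving that, for support size 3 with uniform marginals, unidentifiability of a leaf–parent pair forces the joint PMF matrix to be circulant; hence circulance is necessary as well as sufficient for unidentifiability when k = 3.) -/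
set_option maxHeartbeats 1000000

lemma key_circ (a b c x y z : ℝ) (h1 : a + b + c = 1) (h2 : x + y + z = 1)
    (hs : x^2 + y^2 + z^2 = a^2 + b^2 + c^2)
    (ht : a*x + b*y + c*z = a*b + b*c + c*a) :
    (x = b ∧ y = c ∧ z = a) ∨ (x = c ∧ y = a ∧ z = b) := by
  set u1 := x - b with hu1
  set u2 := y - c with hu2
  set u3 := z - a with hu3
  set d1 := b - c with hd1
  set d2 := c - a with hd2
  set d3 := a - b with hd3
  have e1 : u1 + u2 + u3 = 0 := by simp [hu1, hu2, hu3]; linarith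
  have e2 : a*u1 + b*u2 + c*u3 = 0 := by simp only [hu1, hu2, hu3]; linear_combination ht
  have hn : u1^2 + u2^2 + u3^2 + 2*(b*u1 + c*u2 + a*u3) = 0 := by
    simp only [hu1, hu2, hu3]; linear_combination hs
  set D := d1^2 + d2^2 + d3^2 with hD
  by_cases hD0 : D = 0
  · -- degenerate: a = b = c = 1/3, then x = y = z = 1/3
    have hd1z : d1 = 0 := by
      have : d1^2 = 0 := by nlinarith [sq_nonneg d1, sq_nonneg d2, sq_nonneg d3]
      exact pow_eq_zero_iff (by norm_num) |>.mp this
    have hd2z : d2 = 0 := by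
      have : d2^2 = 0 := by nlinarith [sq_nonneg d1, sq_nonneg d2, sq_nonneg d3]
      exact pow_eq_zero_iff (by norm_num) |>.mp this
    have hab1 : a = b := by simp only [hd1, hd2] at hd1z hd2z; linarith
    have hbc1 : b = c := by simp only [hd1, hd2] at hd1z hd2z; linarith
    have ha : a = 1/3 := by linarith
    have hb : b = 1/3 := by linarith
    have hc : c = 1/3 := by linarith
    have hsumsq : (x - y)^2 + (y - z)^2 + (x - z)^2 = 0 := by
      rw [ha, hb, hc] at hs; nlinarith
    have hxy : x = y := by
      have : (x - y)^2 = 0 := by nlinarith [sq_nonneg (x-y), sq_nonneg (y-z), sq_nonneg (x-z)]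
      have := pow_eq_zero_iff (n := 2) (by norm_num) |>.mp this; linarith
    have hyz : y = z := by
      have : (y - z)^2 = 0 := by nlinarith [sq_nonneg (x-y), sq_nonneg (y-z), sq_nonneg (x-z)]
      have := pow_eq_zero_iff (n := 2) (by norm_num) |>.mp this; linarith
    left
    refine ⟨by linarith, by linarith, by linarith⟩
  · have hpar1 : u1*d2 = u2*d1 := by simp only [hd1, hd2]; linear_combination c*e1 - e2
    have hpar2 : u2*d3 = u3*d2 := by simp only [hd2, hd3]; linear_combination a*e1 - e2
    have hpar3 : u1*d3 = u3*d1 := by simp only [hd1, hd3]; linear_combination e2 - b*e1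
    set T := u1*d1 + u2*d2 + u3*d3 with hT
    have hDu1 : D*u1 = T*d1 := by simp only [hD, hT]; linear_combination d2*hpar1 + d3*hpar3
    have hDu2 : D*u2 = T*d2 := by simp only [hD, hT]; linear_combination (-d1)*hpar1 + d3*hpar2
    have hDu3 : D*u3 = T*d3 := by simp only [hD, hT]; linear_combination (-d1)*hpar3 - d2*hpar2
    have hTT : T*(T + D) = 0 := by
      have hDS : D*(u1^2 + u2^2 + u3^2) = T^2 := by
        simp only [hD, hT]; linear_combination u1*hDu1 + u2*hDu2 + u3*hDu3
      have hbca : 2*(D*(b*u1 + c*u2 + a*u3)) = T*D := by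
        simp only [hD, hT, hd1, hd2, hd3]
        linear_combination 2*b*hDu1 + 2*c*hDu2 + 2*a*hDu3
      linear_combination D*hn - hDS - hbca
    rcases mul_eq_zero.mp hTT with h0 | h0
    · left
      have z1 : u1 = 0 := by
        have h' : D * u1 = 0 := by rw [hDu1, h0]; ring
        rcases mul_eq_zero.mp h' with h | h
        · exact absurd h hD0
        · exact h
      have z2 : u2 = 0 := by
        have h' : D * u2 = 0 := by rw [hDu2, h0]; ring
        rcases mul_eq_zero.mp h' with h | h
        · exact absurd h hD0
        · exact h
      have z3 : u3 = 0 := by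
        have h' : D * u3 = 0 := by rw [hDu3, h0]; ring
        rcases mul_eq_zero.mp h' with h | h
        · exact absurd h hD0
        · exact h
      simp only [hu1, hu2, hu3] at z1 z2 z3
      exact ⟨by linarith, by linarith, by linarith⟩
    · right
      have hTeq : T = -D := by linarith
      have z1 : u1 = -d1 := by
        have h' : D * (u1 + d1) = 0 := by rw [mul_add, hDu1, hTeq]; ring
        rcases mul_eq_zero.mp h' with h | h
        · exact absurd h hD0
        · linarith
      have z2 : u2 = -d2 := by
        have h' : D * (u2 + d2) = 0 := by rw [mul_add, hDu2, hTeq]; ring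
        rcases mul_eq_zero.mp h' with h | h
        · exact absurd h hD0
        · linarith
      have z3 : u3 = -d3 := by
        have h' : D * (u3 + d3) = 0 := by rw [mul_add, hDu3, hTeq]; ring
        rcases mul_eq_zero.mp h' with h | h
        · exact absurd h hD0
        · linarith
      simp only [hu1, hu2, hu3, hd1, hd2, hd3] at z1 z2 z3
      exact ⟨by linarith, by linarith, by linarith⟩


/-- Let `M` be a `3 × 3` doubly stochastic real matrix whose three columns all have the
same Euclidean norm and whose pairwise inner products between distinct columns are all
equal.  Then every column of `M` is a cyclic shift of the first column: for each column
`j` there is `m ∈ Fin 3` with `M i j = M (i + m) 0` for all `i`.  (Circulance is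
necessary for unidentifiability when `k = 3`.) -/
theorem doubly_stochastic_equal_gram_is_circulant (M : Matrix (Fin 3) (Fin 3) ℝ)
    (hnn : ∀ i j, 0 ≤ M i j)
    (hrow : ∀ i, ∑ j, M i j = 1)
    (hcol : ∀ j, ∑ i, M i j = 1)
    (hnorm : ∀ j₁ j₂ : Fin 3, ∑ i, (M i j₁) ^ 2 = ∑ i, (M i j₂) ^ 2)
    (hinner : ∀ j₁ j₂ j₁' j₂' : Fin 3, j₁ ≠ j₂ → j₁' ≠ j₂' →
      ∑ i, M i j₁ * M i j₂ = ∑ i, M i j₁' * M i j₂') :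
    ∀ j : Fin 3, ∃ m : Fin 3, ∀ i : Fin 3, M i j = M (i + m) 0 := by
  intro j
  by_cases hj0 : j = 0
  · exact ⟨0, fun i => by rw [hj0, add_zero]⟩
  · -- set up the scalar data
    have h1 : M 0 0 + M 1 0 + M 2 0 = 1 := by
      have := hcol 0; rwa [Fin.sum_univ_three] at this
    have h2 : M 0 j + M 1 j + M 2 j = 1 := by
      have := hcol j; rwa [Fin.sum_univ_three] at this
    have hr0 : M 0 0 + M 0 1 + M 0 2 = 1 := by
      have := hrow 0; rwa [Fin.sum_univ_three] at this
    have hr1 : M 1 0 + M 1 1 + M 1 2 = 1 := by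
      have := hrow 1; rwa [Fin.sum_univ_three] at this
    have hr2 : M 2 0 + M 2 1 + M 2 2 = 1 := by
      have := hrow 2; rwa [Fin.sum_univ_three] at this
    have hs : (M 0 j)^2 + (M 1 j)^2 + (M 2 j)^2 = (M 0 0)^2 + (M 1 0)^2 + (M 2 0)^2 := by
      have := hnorm j 0; rwa [Fin.sum_univ_three, Fin.sum_univ_three] at this
    have e12 : ∑ i, M i 0 * M i 1 = ∑ i, M i 0 * M i 2 :=
      hinner 0 1 0 2 (by decide) (by decide)
    have htj : ∑ i, M i 0 * M i j = ∑ i, M i 0 * M i 1 :=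
      hinner 0 j 0 1 (fun h => hj0 h.symm) (by decide)
    rw [Fin.sum_univ_three, Fin.sum_univ_three] at e12 htj
    have ht : M 0 0 * M 0 j + M 1 0 * M 1 j + M 2 0 * M 2 j
        = M 0 0 * M 1 0 + M 1 0 * M 2 0 + M 2 0 * M 0 0 := by
      linear_combination htj + (1/2)*e12
        + (1/2)*((M 0 0)*hr0 + (M 1 0)*hr1 + (M 2 0)*hr2)
        + (-(M 0 0 + M 1 0 + M 2 0)/2)*h1
    have key := key_circ (M 0 0) (M 1 0) (M 2 0) (M 0 j) (M 1 j) (M 2 j) h1 h2 hs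
      (by linear_combination ht)
    rcases key with ⟨hx, hy, hz⟩ | ⟨hx, hy, hz⟩
    · refine ⟨1, fun i => ?_⟩
      fin_cases i
      · simpa using hx
      · simpa using hy
      · simpa using hz
    · refine ⟨2, fun i => ?_⟩
      fin_cases i
      · simpa using hx
      · simpa using hy
      · simpa using hz
end

section
/- Let k ≥ 2 and let θ, θ' be real numbers. Define v : Fin k → ℝ by v(0) = 1 − θ' − (k−2)θ, v(1) = θ', and v(i) = θ for 2 ≤ i ≤ k−1. Then (1 − kθ)·det(circulant(v)) = (1 − θ' − (k−1)θ)^k − (θ − θ')^k, where circulant(v) is the k×k circulant matrix generated by v. Equivalently, writing α = 1 − kθ and δ = θ' − θ, if α ≠ 0 then det(circulant(v)) = α^{k−1}·((1 − δ/α)^k − (−δ/α)^k). (This computes the determinant of the conditional PMF matrix of an edge in a perturbed symmetric graphical model, used in the sample complexity lower bound.) -/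
/-!
Subtracting `θ` from every entry turns `circulant v` into `circulant w` with
`w = (c, δ, 0, …, 0)`, `c = 1 - θ' - (k - 1)θ`, `δ = θ' - θ`. In the Leibniz expansion of
`det (circulant w)` only the identity and the `k`-cycle `i ↦ i + 1` survive, giving
`c ^ k - (-δ) ^ k`. The constant matrix `θJ` (`J` all ones) is absorbed through column sums:
if every column of `N` sums to `a`, adding all rows into one shows `det N = a · det N'` and
`det (N + θJ) = (a + kθ) · det N'` for one and the same matrix `N'` (that row replaced by
ones), and here `a = 1 - kθ`, `a + kθ = 1`.
-/

open Matrix Equiv Fin.NatCast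

namespace Matrix

theorem sum_circulant_apply_right {n α : Type*} [Fintype n] [AddGroup n] [AddCommMonoid α]
    (v : n → α) (j : n) : ∑ i, circulant v i j = ∑ i, v i :=
  Fintype.sum_equiv (Equiv.subRight j) _ _ fun _ => rfl

variable {n R : Type*} [Fintype n] [DecidableEq n] [CommRing R]

theorem det_eq_mul_det_updateRow_one_of_col_sum_eq (N : Matrix n n R) {a : R}
    (hN : ∀ j, ∑ i, N i j = a) (i₀ : n) : N.det = a * (N.updateRow i₀ 1).det := by
  have hrows : ∑ i, (1 : R) • N i = a • 1 := by
    ext j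
    rw [Finset.sum_apply]
    simpa using hN j
  rw [← det_updateRow_smul, ← hrows, det_updateRow_sum, one_smul]

theorem mul_det_add_of_const_of_col_sum_eq (N : Matrix n n R) {a : R}
    (hN : ∀ j, ∑ i, N i j = a) (θ : R) :
    a * (N + of fun _ _ => θ).det = (a + Fintype.card n * θ) * N.det := by
  cases isEmpty_or_nonempty n
  · simp
  obtain ⟨i₀⟩ := ‹Nonempty n›
  set M : Matrix n n R := N + of fun _ _ => θ with hM
  have hsum : ∀ j, ∑ i, M i j = a + Fintype.card n * θ := by
    intro j
    simp [hM, Finset.sum_add_distrib, hN j]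
  have hrow : (M.updateRow i₀ 1).det = (N.updateRow i₀ 1).det := by
    refine det_eq_of_forall_row_eq_smul_add_const (Function.update (fun _ => θ) i₀ 0) i₀
      (by simp) fun i j => ?_
    rcases eq_or_ne i i₀ with rfl | hi
    · simp
    · simp [hM, hi]
  rw [det_eq_mul_det_updateRow_one_of_col_sum_eq _ hsum i₀, hrow,
    det_eq_mul_det_updateRow_one_of_col_sum_eq N hN i₀]
  ring

end Matrix

theorem Equiv.Perm.eq_one_or_eq_finRotate_of_forall_apply_eq_or_eq_add_one {m : ℕ}
    (σ : Perm (Fin (m + 2))) (h : ∀ i, σ i = i ∨ σ i = i + 1) :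
    σ = 1 ∨ σ = finRotate (m + 2) := by
  by_cases hfix : ∀ i, σ i = i
  · exact .inl (Equiv.ext hfix)
  push Not at hfix
  obtain ⟨i₀, hi₀⟩ := hfix
  -- Once some point moves, injectivity forces its successor to move as well.
  have hshift : ∀ l : ℕ, σ (i₀ + l) = i₀ + l + 1 := by
    intro l
    induction l with
    | zero => simpa using (h i₀).resolve_left hi₀
    | succ l ih =>
      push_cast
      rw [← add_assoc]
      refine (h _).resolve_left fun hfix => ?_
      have : i₀ + l + 1 = i₀ + l + 0 := σ.injective (by rw [hfix, add_zero, ih])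
      exact one_ne_zero (add_left_cancel this)
  refine .inr (Equiv.ext fun j => ?_)
  have hj := hshift (j - i₀ : Fin (m + 2))
  rw [Fin.cast_val_eq_self, add_sub_cancel] at hj
  rw [hj, finRotate_apply]

theorem Matrix.det_circulant_single_zero_add_single_one {R : Type*} [CommRing R] (m : ℕ)
    (c δ : R) :
    (circulant (Pi.single 0 c + Pi.single 1 δ : Fin (m + 2) → R)).det
      = c ^ (m + 2) - (-δ) ^ (m + 2) := by
  set w : Fin (m + 2) → R := Pi.single 0 c + Pi.single 1 δ
  have h10 : (1 : Fin (m + 2)) ≠ 0 := by simp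
  have hrot : finRotate (m + 2) ≠ 1 := fun h =>
    h10 (by simpa [finRotate_apply] using congr($h 0))
  -- Only the identity and the rotation avoid the zero entries `w (σ i - i)`.
  rw [det_apply', Fintype.sum_eq_add 1 (finRotate (m + 2)) hrot.symm]
  · have hid : ∏ i, circulant w ((1 : Perm (Fin (m + 2))) i) i = c ^ (m + 2) := by
      simp [circulant_apply, w]
    have hshift : ∏ i, circulant w (finRotate (m + 2) i) i = δ ^ (m + 2) := by
      simp [circulant_apply, w, finRotate_apply, h10]
    rw [hid, hshift, Perm.sign_one, sign_finRotate]
    push_cast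
    ring
  · rintro σ ⟨hσ1, hσrot⟩
    obtain ⟨i, hi⟩ : ∃ i, ¬(σ i = i ∨ σ i = i + 1) := by
      by_contra! hall
      exact (σ.eq_one_or_eq_finRotate_of_forall_apply_eq_or_eq_add_one hall).elim hσ1 hσrot
    push Not at hi
    rw [Finset.prod_eq_zero (Finset.mem_univ i), mul_zero]
    simp [circulant_apply, w, sub_eq_iff_eq_add, hi.1, add_comm 1 i, hi.2]

/-- Determinant of the conditional PMF matrix of an edge in a perturbed symmetric
graphical model.  For `k ≥ 2` and reals `θ, θ'`, let `v : Fin k → ℝ` be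
`v 0 = 1 − θ' − (k−2)θ`, `v 1 = θ'`, `v i = θ` otherwise.  Then
`(1 − kθ)·det(circulant v) = (1 − θ' − (k−1)θ)^k − (θ − θ')^k`; equivalently, writing
`α = 1 − kθ` and `δ = θ' − θ`, if `α ≠ 0` then
`det(circulant v) = α^{k−1}·((1 − δ/α)^k − (−δ/α)^k)`. -/
theorem perturbed_symmetric_circulant_det (k : ℕ) (hk : 2 ≤ k) (θ θ' : ℝ) :
    let v : Fin k → ℝ := fun i =>
      if (i : ℕ) = 0 then 1 - θ' - ((k : ℝ) - 2) * θ
      else if (i : ℕ) = 1 then θ' else θ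
    (1 - (k : ℝ) * θ) * (Matrix.circulant v).det
        = (1 - θ' - ((k : ℝ) - 1) * θ) ^ k - (θ - θ') ^ k ∧
    ((1 - (k : ℝ) * θ) ≠ 0 →
      (Matrix.circulant v).det
        = (1 - (k : ℝ) * θ) ^ (k - 1) *
            ((1 - (θ' - θ) / (1 - (k : ℝ) * θ)) ^ k
              - (-((θ' - θ) / (1 - (k : ℝ) * θ))) ^ k)) := by
  intro v
  obtain ⟨m, rfl⟩ : ∃ m, k = m + 2 := ⟨k - 2, by omega⟩
  set c : ℝ := 1 - θ' - (((m + 2 : ℕ) : ℝ) - 1) * θ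
  set δ : ℝ := θ' - θ
  set w : Fin (m + 2) → ℝ := Pi.single 0 c + Pi.single 1 δ
  have hv : circulant v = circulant w + of fun _ _ => θ := by
    ext i j
    simp only [circulant_apply, Matrix.add_apply, of_apply, v, w, c, δ, Pi.add_apply,
      Pi.single_apply, Fin.ext_iff, Fin.val_zero, Fin.val_one]
    split_ifs <;> first | omega | (push_cast; ring)
  have hw : ∀ j, ∑ i, circulant w i j = c + δ := fun j =>
    (sum_circulant_apply_right w j).trans (by simp [w, Finset.sum_add_distrib])
  have hcδ : c + δ = 1 - ((m + 2 : ℕ) : ℝ) * θ := by ring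
  have hdet : (c + δ) * (circulant v).det = c ^ (m + 2) - (-δ) ^ (m + 2) := by
    have := mul_det_add_of_const_of_col_sum_eq _ hw θ
    rwa [← hv, det_circulant_single_zero_add_single_one, Fintype.card_fin, hcδ, sub_add_cancel,
      one_mul, ← hcδ] at this
  rw [← hcδ]
  refine ⟨by rwa [← neg_sub θ' θ], fun hα => ?_⟩
  rw [one_sub_div hα, add_sub_cancel_right, neg_div', div_pow, div_pow, ← sub_div, ← hdet,
    show m + 2 - 1 = m + 1 from rfl]
  field_simp
  ring
end

section
/- Let k ≥ 1, let 0 ≤ q < 1 and 0 < p_min, and let P be a k×k real diagonal matrix whose diagonal entries are all at least p_min and sum to 1. Set E := (1−q)I + (q/k)O and P' := (1−q)P + (q/k)I. Then det(E·P) > 0, det(P') > 0, and −log( det(E·P) / √(det(P')·det(P)) ) ≤ (1−k)·log(1−q) − (k/2)·log(k·p_min). (This bounds the information distance η_max between a clean node and its noisy observation through a k-ary symmetric channel: d_{i',i} ≤ (1−k)log(1−q_max) − 0.5k·log(k·p_min).) -/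
/-!
The channel matrix `E = (1-q) • (I + (q / (k (1-q))) 𝟙 𝟙ᵀ)` is a rank-one perturbation of a
scalar matrix, so the matrix determinant lemma gives `det E = (1-q)^(k-1)`, while `P'` is
diagonal. The distance thus equals `(1-k) log(1-q) + (log det P' - log det P) / 2`. Each
diagonal entry `(1-q) pᵢ + q/k` of `P'` is a convex combination of `pᵢ` and `1/k`, both at most
`pᵢ / (k p_min)` because `k p_min ≤ ∑ pᵢ = 1` and `p_min ≤ pᵢ`; hence
`det P' ≤ det P / (k p_min)^k`.
-/

open Matrix Real

theorem det_smul_one_add_smul_allOnes (k : ℕ) {a : ℝ} (ha : a ≠ 0) (b : ℝ) :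
    (a • (1 : Matrix (Fin k) (Fin k) ℝ) + b • allOnes k).det = a ^ k * (1 + k * b / a) := by
  have hrankOne : a • (1 : Matrix (Fin k) (Fin k) ℝ) + b • allOnes k
      = a • (1 + replicateCol Unit (fun _ : Fin k => b / a)
          * replicateRow Unit (fun _ : Fin k => (1 : ℝ))) := by
    ext i j
    by_cases hij : i = j <;>
      simp [allOnes, hij, one_apply, ← vecMulVec_eq, vecMulVec_apply, mul_div_cancel₀ _ ha, mul_add]
  rw [hrankOne, det_smul, det_one_add_replicateCol_mul_replicateRow]
  simp [dotProduct, mul_div_assoc]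

theorem det_symmetricChannel {k : ℕ} (hk : k ≠ 0) {q : ℝ} (hq : 1 - q ≠ 0) :
    ((1 - q) • (1 : Matrix (Fin k) (Fin k) ℝ) + (q / k) • allOnes k).det = (1 - q) ^ (k - 1) := by
  rw [det_smul_one_add_smul_allOnes k hq, mul_div_cancel₀ q (Nat.cast_ne_zero.mpr hk),
    pow_sub₀ _ hq (Nat.one_le_iff_ne_zero.mpr hk)]
  field_simp
  ring

theorem smul_diagonal_add_smul_one {n R : Type*} [Fintype n] [DecidableEq n] [CommRing R]
    (a b : R) (d : n → R) :
    a • diagonal d + b • (1 : Matrix n n R) = diagonal fun i => a * d i + b := by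
  rw [smul_one_eq_diagonal, ← diagonal_smul, diagonal_add]
  rfl

theorem one_sub_mul_add_div_le_div {n q pmin x : ℝ} (hn : 0 < n) (hq0 : 0 ≤ q) (hq1 : q ≤ 1)
    (hp : 0 < pmin) (hnp : n * pmin ≤ 1) (hx : pmin ≤ x) :
    (1 - q) * x + q / n ≤ x / (n * pmin) := by
  have hx_le : x ≤ x / (n * pmin) := le_div_self (hp.trans_le hx).le (by positivity) hnp
  have hinv_le : 1 / n ≤ x / (n * pmin) := by
    rw [div_le_div_iff₀ hn (by positivity)]
    nlinarith
  calc (1 - q) * x + q / n = (1 - q) * x + q * (1 / n) := by ring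
    _ ≤ (1 - q) * (x / (n * pmin)) + q * (x / (n * pmin)) := by gcongr
    _ = x / (n * pmin) := by ring

theorem neg_log_div_sqrt_le {a D D' c : ℝ} (n : ℕ) (ha : 0 < a) (hD : 0 < D) (hD' : 0 < D')
    (hc : 0 < c) (h : D' ≤ D / c ^ n) :
    -log (a * D / √(D' * D)) ≤ -log a - (n / 2) * log c := by
  have hlog : log D' ≤ log D - n * log c := by
    simpa [log_div hD.ne' (pow_pos hc n).ne', log_pow] using log_le_log hD' h
  rw [log_div (by positivity) (by positivity), log_mul ha.ne' hD.ne', log_sqrt (by positivity),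
    log_mul hD'.ne' hD.ne']
  linarith

/-- Bound on the information distance between a clean node and its noisy observation
through a `k`-ary symmetric channel: for `k ≥ 1`, `0 ≤ q < 1`, `0 < p_min`, and `P`
diagonal with entries `≥ p_min` summing to 1, with `E = (1−q)I + (q/k)O` and
`P' = (1−q)P + (q/k)I`, we have `det(E·P) > 0`, `det(P') > 0`, and
`−log(det(E·P)/√(det(P')·det(P))) ≤ (1−k)·log(1−q) − (k/2)·log(k·p_min)`. -/
theorem noisy_node_distance_bound (k : ℕ) (hk : 1 ≤ k) (q pmin : ℝ)
    (hq0 : 0 ≤ q) (hq1 : q < 1) (hp : 0 < pmin)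
    (d : Fin k → ℝ) (hd : ∀ i, pmin ≤ d i) (hsum : ∑ i, d i = 1) :
    0 < (((1 - q) • (1 : Matrix (Fin k) (Fin k) ℝ) + (q / k) • allOnes k)
          * Matrix.diagonal d).det ∧
    0 < ((1 - q) • Matrix.diagonal d + (q / k) • (1 : Matrix (Fin k) (Fin k) ℝ)).det ∧
    -Real.log
        ((((1 - q) • (1 : Matrix (Fin k) (Fin k) ℝ) + (q / k) • allOnes k)
            * Matrix.diagonal d).det
          / Real.sqrt
              (((1 - q) • Matrix.diagonal d
                  + (q / k) • (1 : Matrix (Fin k) (Fin k) ℝ)).det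
                * (Matrix.diagonal d).det))
      ≤ (1 - (k : ℝ)) * Real.log (1 - q) - ((k : ℝ) / 2) * Real.log ((k : ℝ) * pmin) := by
  have hq : 0 < 1 - q := by linarith
  have hkpos : (0 : ℝ) < k := by exact_mod_cast hk
  have hkp : (k : ℝ) * pmin ≤ 1 := by
    simpa [hsum] using Finset.card_nsmul_le_sum Finset.univ d pmin fun i _ => hd i
  have hD : 0 < ∏ i, d i := Finset.prod_pos fun i _ => hp.trans_le (hd i)
  have hentry : ∀ i, 0 < (1 - q) * d i + q / k := fun i => by
    have := hp.trans_le (hd i)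
    positivity
  have hprod : ∏ i, ((1 - q) * d i + q / k) ≤ (∏ i, d i) / (k * pmin) ^ k := by
    calc ∏ i, ((1 - q) * d i + q / k) ≤ ∏ i, (d i / (k * pmin)) :=
          Finset.prod_le_prod (fun i _ => (hentry i).le)
            fun i _ => one_sub_mul_add_div_le_div hkpos hq0 hq1.le hp hkp (hd i)
      _ = (∏ i, d i) / (k * pmin) ^ k := by simp [Finset.prod_div_distrib]
  rw [det_mul, det_symmetricChannel (by omega) hq.ne', smul_diagonal_add_smul_one, det_diagonal,
    det_diagonal]
  refine ⟨by positivity, Finset.prod_pos fun i _ => hentry i, ?_⟩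
  calc _ ≤ -log ((1 - q) ^ (k - 1)) - (k / 2) * log (k * pmin) :=
        neg_log_div_sqrt_le k (by positivity) hD (Finset.prod_pos fun i _ => hentry i)
          (by positivity) hprod
    _ = _ := by rw [log_pow, Nat.cast_sub hk]; ring
end
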